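/- arXiv:1801.02329 — 7 statements merged into one kernel-verified Lean document; each statement's English description precedes it below -/
import Mathlib

section
/- Let q be a prime power, let F_q be a finite field with q elements, and let n, k, δ, α be positive integers with α ≥ 2 and δ + k ≤ n. If C is an α-(n,k,δ)^c_q covering Grassmannian code, then every subspace W of F_q^n of dimension n − δ − k + 1 is contained in at most α − 1 of the subspaces V^⊥ with V ∈ C; that is, the orthogonal-complement code C^⊥ = {V^⊥ : V ∈ C} is such that each (n − δ − k + 1)-dimensional subspace of F_q^n lies in at most α − 1 of its members. -/
/-!
If `α` members `V` of `C` satisfied `W ≤ V^⊥`, they would all lie in `W^⊥`, whose dimension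
`n - dim W` (the dot product being nondegenerate) is less than `δ + k`; hence so would their span,
contradicting the covering property.
-/

open scoped Classical

/-- The orthogonal complement of a subspace of `F^n` with respect to the
standard symmetric bilinear form `b(x,y) = ∑ i, x i * y i`. -/
def perp {F : Type*} [Field F] {n : ℕ}
    (V : Submodule F (Fin n → F)) : Submodule F (Fin n → F) where
  carrier := {x | ∀ v ∈ V, ∑ i, x i * v i = 0}
  zero_mem' := by
    intro v hv
    simp
  add_mem' := by
    intro a b ha hb v hv
    simp only [Set.mem_setOf_eq] at *
    simp [Pi.add_apply, add_mul, Finset.sum_add_distrib, ha v hv, hb v hv]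
  smul_mem' := by
    intro c a ha v hv
    simp only [Set.mem_setOf_eq] at *
    simp [Pi.smul_apply, smul_eq_mul, mul_assoc, ← Finset.mul_sum, ha v hv]

theorem Set.exists_finset_subset_card_eq_of_le_ncard {α : Type*} {s : Set α} {a : ℕ}
    (h : a ≤ s.ncard) : ∃ t : Finset α, ↑t ⊆ s ∧ t.card = a := by
  rcases Nat.eq_zero_or_pos a with rfl | ha
  · exact ⟨∅, by simp, rfl⟩
  have hs : s.Finite := Set.finite_of_ncard_pos (ha.trans_le h)
  obtain ⟨t, hts, rfl⟩ := Finset.exists_subset_card_eq (s := hs.toFinset) (n := a)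
    (by rwa [← Set.ncard_eq_toFinset_card s hs])
  exact ⟨t, fun x hx => hs.mem_toFinset.1 (hts hx), rfl⟩

section Perp

variable {F : Type*} [Field F] {n : ℕ}

theorem le_perp_comm {V W : Submodule F (Fin n → F)} : W ≤ perp V ↔ V ≤ perp W := by
  constructor <;> intro h x hx y hy <;> simpa only [mul_comm] using h hy x hx

theorem perp_eq_orthogonal (V : Submodule F (Fin n → F)) :
    perp V = (1 : Matrix (Fin n) (Fin n) F).toBilin'.orthogonal V := by
  ext x
  simp only [LinearMap.BilinForm.mem_orthogonal_iff, Matrix.toBilin'_apply', Matrix.one_mulVec,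
    dotProduct, mul_comm]
  rfl

theorem finrank_perp (V : Submodule F (Fin n → F)) :
    Module.finrank F (perp V) = n - Module.finrank F V := by
  have hdot := LinearMap.BilinForm.nondegenerate_toBilin'_of_det_ne_zero'
    (1 : Matrix (Fin n) (Fin n) F) (by simp)
  rw [perp_eq_orthogonal, LinearMap.BilinForm.finrank_orthogonal hdot, Module.finrank_fin_fun]

end Perp

theorem stmt1_general (F : Type) [Field F] (n k d a : ℕ)
    (C : Set (Submodule F (Fin n → F)))
    (hcov : ∀ S : Finset (Submodule F (Fin n → F)), ↑S ⊆ C → S.card = a →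
      d + k ≤ Module.finrank F ↥(S.sup id)) :
    ∀ W : Submodule F (Fin n → F), Module.finrank F W = n - d - k + 1 →
      Set.ncard {V | V ∈ C ∧ W ≤ perp V} ≤ a - 1 := by
  intro W hW
  by_contra! hmany
  obtain ⟨S, hSC, hScard⟩ :=
    Set.exists_finset_subset_card_eq_of_le_ncard (Nat.le_of_pred_lt hmany)
  have hspan : d + k ≤ Module.finrank F ↥(S.sup id) :=
    hcov S (fun V hV => (hSC hV).1) hScard
  have hS_le : S.sup id ≤ perp W := Finset.sup_le fun V hV => le_perp_comm.1 (hSC hV).2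
  have hperp := (Submodule.finrank_mono hS_le).trans_eq (finrank_perp W)
  have hWn : Module.finrank F W ≤ n :=
    (Submodule.finrank_le W).trans_eq (Module.finrank_fin_fun F)
  omega

/-- If `C` is an `a`-`(n,k,d)^c_q` covering Grassmannian code, then every
`(n - d - k + 1)`-dimensional subspace `W` of `F_q^n` is contained in at most
`a - 1` of the subspaces `V^⊥` with `V ∈ C`. -/
theorem stmt1 (q : ℕ) (hq : IsPrimePow q) (F : Type) [Field F] [Fintype F]
    (hF : Fintype.card F = q) (n k d a : ℕ)
    (hn : 1 ≤ n) (hk : 1 ≤ k) (hd : 1 ≤ d) (ha : 2 ≤ a) (hdkn : d + k ≤ n)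
    (C : Set (Submodule F (Fin n → F)))
    (hC : ∀ V ∈ C, Module.finrank F V = k)
    (hcov : ∀ S : Finset (Submodule F (Fin n → F)), ↑S ⊆ C → S.card = a →
      d + k ≤ Module.finrank F ↥(S.sup id)) :
    ∀ W : Submodule F (Fin n → F), Module.finrank F W = n - d - k + 1 →
      Set.ncard {V | V ∈ C ∧ W ≤ perp V} ≤ a - 1 :=
  stmt1_general F n k d a C hcov
end

section
/- Let q be a prime power, let F_q be a finite field with q elements, and let 1 ≤ t ≤ k < n and λ ≥ 1. If C is a t-(n,k,λ)^m_q multiple Grassmannian code, then for any λ + 1 distinct elements X_1, …, X_{λ+1} of C, the subspaces X_1^⊥, …, X_{λ+1}^⊥ (each of dimension n − k) span a subspace of F_q^n of dimension at least n − t + 1; that is, C^⊥ = {X^⊥ : X ∈ C} has minimum (λ+1)-Grassmannian covering n − t + 1 and minimum (λ+1)-Grassmannian distance k − t + 1. -/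
open scoped Classical

/-!
The orthogonal complement of `X₁^⊥ + ⋯ + X_{λ+1}^⊥` is `X₁ ∩ ⋯ ∩ X_{λ+1}`. If this
intersection had dimension at least `t`, any `t`-dimensional subspace of it would lie in
`λ + 1` codewords. Hence the intersection has dimension `< t`, and the span of the
complements has dimension `≥ n - t + 1`.
-/

open Module LinearMap.BilinForm Matrix

theorem Submodule.exists_le_finrank_eq {K V : Type*} [DivisionRing K] [AddCommGroup V]
    [Module K V] {W : Submodule K V} {t : ℕ} (ht : t ≤ finrank K W) :
    ∃ T ≤ W, finrank K T = t := by
  obtain ⟨f, hf⟩ := exists_linearIndependent_of_le_finrank ht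
  refine ⟨span K (Set.range (W.subtype ∘ f)), ?_, ?_⟩
  · rw [Submodule.span_le]
    rintro _ ⟨i, rfl⟩
    exact (f i).2
  · rw [finrank_span_eq_card (hf.map' W.subtype W.ker_subtype), Fintype.card_fin]

theorem finrank_finsetInf_lt_of_forall_ncard_le {K V : Type*} [DivisionRing K] [Finite K]
    [AddCommGroup V] [Module K V] [FiniteDimensional K V] {C : Set (Submodule K V)} {t l : ℕ}
    (hmult : ∀ T : Submodule K V, finrank K T = t → {X | X ∈ C ∧ T ≤ X}.ncard ≤ l)
    {S : Finset (Submodule K V)} (hSC : ↑S ⊆ C) (hS : S.card = l + 1) :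
    finrank K ↥(S.inf id) < t := by
  by_contra! ht
  obtain ⟨T, hT, hTt⟩ := Submodule.exists_le_finrank_eq ht
  have : Finite V := Module.finite_of_finite K
  have : Finite (Submodule K V) := Finite.of_injective _ SetLike.coe_injective
  have hS_sub : (S : Set (Submodule K V)) ⊆ {X | X ∈ C ∧ T ≤ X} :=
    fun X hX => ⟨hSC hX, hT.trans (Finset.inf_le (f := id) hX)⟩
  have hS_le := Set.ncard_le_ncard hS_sub (Set.toFinite _)
  rw [Set.ncard_coe_finset] at hS_le
  have := hmult T hTt
  omega

section BilinForm

variable {K V : Type*} [Field K] [AddCommGroup V] [Module K V] [FiniteDimensional K V]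
  {B : LinearMap.BilinForm K V}

theorem orthogonal_finsetSup_orthogonal_le_inf (hB : B.Nondegenerate) (hB₀ : B.IsRefl)
    (S : Finset (Submodule K V)) : B.orthogonal (S.sup B.orthogonal) ≤ S.inf id :=
  Finset.le_inf fun X hX => by
    have := orthogonal_le (B := B) (Finset.le_sup (f := B.orthogonal) hX)
    rwa [orthogonal_orthogonal hB hB₀] at this

theorem finrank_sub_finrank_inf_le_finrank_finsetSup_orthogonal (hB : B.Nondegenerate)
    (hB₀ : B.IsRefl) (S : Finset (Submodule K V)) :
    finrank K V - finrank K ↥(S.inf id) ≤ finrank K ↥(S.sup B.orthogonal) := by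
  have hle := Submodule.finrank_mono (orthogonal_finsetSup_orthogonal_le_inf hB hB₀ S)
  have hsum := finrank_orthogonal hB (S.sup B.orthogonal)
  have hle_top := Submodule.finrank_le (S.sup B.orthogonal)
  omega

end BilinForm

theorem dotProductBilin_nondegenerate (F : Type*) [Field F] (n : ℕ) :
    Nondegenerate (dotProductBilin F F : LinearMap.BilinForm F (Fin n → F)) := by
  refine ⟨fun x hx => funext fun i => ?_, fun y hy => funext fun i => ?_⟩
  · simpa using hx (Pi.single i 1)
  · simpa using hy (Pi.single i 1)

theorem dotProductBilin_isRefl (F : Type*) [Field F] (n : ℕ) :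
    IsRefl (dotProductBilin F F : LinearMap.BilinForm F (Fin n → F)) := fun x y h => by
  simpa [dotProduct_comm] using h

theorem perp_eq_orthogonal_dotProductBilin {F : Type*} [Field F] {n : ℕ}
    (V : Submodule F (Fin n → F)) :
    perp V = orthogonal (dotProductBilin F F) V := by
  ext x
  simp [perp, mem_orthogonal_iff, dotProduct, mul_comm]

theorem stmt3_general (F : Type) [Field F] [Fintype F]
    (n k t l : ℕ)
    (htk : t ≤ k) (hkn : k < n)
    (C : Set (Submodule F (Fin n → F)))
    (hmult : ∀ T : Submodule F (Fin n → F), Module.finrank F T = t →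
      Set.ncard {V | V ∈ C ∧ T ≤ V} ≤ l) :
    ∀ S : Finset (Submodule F (Fin n → F)), ↑S ⊆ C → S.card = l + 1 →
      n - t + 1 ≤ Module.finrank F ↥(S.sup fun X => perp X) := by
  intro S hSC hS
  have hinf : finrank F ↥(S.inf id) < t := finrank_finsetInf_lt_of_forall_ncard_le hmult hSC hS
  have hsup := finrank_sub_finrank_inf_le_finrank_finsetSup_orthogonal
    (dotProductBilin_nondegenerate F n) (dotProductBilin_isRefl F n) S
  rw [finrank_fin_fun] at hsup
  rw [show (perp : Submodule F (Fin n → F) → _) = _ from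
    funext perp_eq_orthogonal_dotProductBilin]
  calc n - t + 1 ≤ n - finrank F ↥(S.inf id) := by omega
    _ ≤ _ := hsup

/-- If `C` is a `t`-`(n,k,l)^m_q` multiple Grassmannian code, then any `l + 1`
distinct codewords `X_1, …, X_{l+1}` of `C` have orthogonal complements
`X_1^⊥, …, X_{l+1}^⊥` spanning a subspace of dimension at least `n - t + 1`;
i.e. `C^⊥` has minimum `(l+1)`-Grassmannian covering `n - t + 1` (equivalently,
minimum `(l+1)`-Grassmannian distance `k - t + 1`). -/
theorem stmt3 (q : ℕ) (hq : IsPrimePow q) (F : Type) [Field F] [Fintype F]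
    (hF : Fintype.card F = q) (n k t l : ℕ)
    (ht1 : 1 ≤ t) (htk : t ≤ k) (hkn : k < n) (hl : 1 ≤ l)
    (C : Set (Submodule F (Fin n → F)))
    (hC : ∀ V ∈ C, Module.finrank F V = k)
    (hmult : ∀ T : Submodule F (Fin n → F), Module.finrank F T = t →
      Set.ncard {V | V ∈ C ∧ T ≤ V} ≤ l) :
    ∀ S : Finset (Submodule F (Fin n → F)), ↑S ⊆ C → S.card = l + 1 →
      n - t + 1 ≤ Module.finrank F ↥(S.sup fun X => perp X) :=
  stmt3_general F n k t l htk hkn C hmult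
end

section
/- Let q be a prime power, let F_q be a finite field with q elements, and let n, k, t be positive integers with 1 ≤ t < k < n and n − 2k + t ≥ 1. Then A_q(n,k,t;1) = A_q(n, n−k, n−2k+t; 1), i.e., the maximum cardinality of a t-(n,k,1)^m_q multiple Grassmannian code equals the maximum cardinality of an (n−2k+t)-(n, n−k, 1)^m_q multiple Grassmannian code. -/
open scoped Classical

/-- `C` is a `t`-`(n,k,l)^m_q` multiple Grassmannian code: a set of
`k`-dimensional subspaces of `F^n` such that every `t`-dimensional subspace
of `F^n` is contained in at most `l` codewords. -/
def IsMultipleCode (F : Type*) [Field F] (n k t l : ℕ)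
    (C : Finset (Submodule F (Fin n → F))) : Prop :=
  (∀ V ∈ C, Module.finrank F V = k) ∧
  ∀ T : Submodule F (Fin n → F), Module.finrank F T = t →
    (C.filter fun V => T ≤ V).card ≤ l

/-- `Aq F n k t l` is the maximum cardinality of a `t`-`(n,k,l)^m_q`
multiple Grassmannian code (no repeated codewords). -/
noncomputable def Aq (F : Type*) [Field F] (n k t l : ℕ) : ℕ :=
  sSup {m | ∃ C : Finset (Submodule F (Fin n → F)), IsMultipleCode F n k t l C ∧ C.card = m}

open Module Submodule

section Aux
variable {F : Type} [Field F] [Fintype F] {n : ℕ}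

instance : Finite (Submodule F (Fin n → F)) :=
  Finite.of_injective (fun V => (V : Set (Fin n → F))) SetLike.coe_injective

noncomputable instance : Fintype (Submodule F (Fin n → F)) := Fintype.ofFinite _

set_option linter.unusedSectionVars false

/-- existence of a subspace of prescribed dimension -/
lemma exists_sub (X : Submodule F (Fin n → F)) {t : ℕ} (h : t ≤ finrank F X) :
    ∃ T : Submodule F (Fin n → F), T ≤ X ∧ finrank F T = t := by
  obtain ⟨f, hf⟩ := exists_linearIndependent_of_le_finrank h
  refine ⟨span F (Set.range fun i => (f i : Fin n → F)), ?_, ?_⟩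
  · rw [span_le]; rintro x ⟨i, rfl⟩; exact (f i).2
  · have : LinearIndependent F (fun i => (f i : Fin n → F)) := hf.map' X.subtype (ker_subtype X)
    rw [finrank_span_eq_card this, Fintype.card_fin]

/-- duality map -/
noncomputable def Phi (V : Submodule F (Fin n → F)) : Submodule F (Fin n → F) :=
  Submodule.map
    ((Pi.basisFun F (Fin n)).toDualEquiv.symm :
      Module.Dual F (Fin n → F) ≃ₗ[F] (Fin n → F)).toLinearMap V.dualAnnihilator

lemma Phi_inj : Function.Injective (Phi (F := F) (n := n)) := by
  intro V W h
  have := Submodule.map_injective_of_injective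
    ((Pi.basisFun F (Fin n)).toDualEquiv.symm.injective) h
  exact Subspace.dualAnnihilator_inj.mp this

lemma finrank_Phi (V : Submodule F (Fin n → F)) :
    finrank F (Phi V) + finrank F V = n := by
  have h1 : finrank F (Phi V) = finrank F V.dualAnnihilator :=
    LinearEquiv.finrank_map_eq _ _
  have h2 : finrank F V.dualAnnihilator = finrank F ((Fin n → F) ⧸ V) :=
    (LinearEquiv.finrank_eq (Subspace.quotEquivAnnihilator V)).symm
  rw [h1, h2, Submodule.finrank_quotient_add_finrank, Module.finrank_fin_fun]

lemma Phi_inf (V W : Submodule F (Fin n → F)) :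
    Phi V ⊓ Phi W = Phi (V ⊔ W) := by
  unfold Phi
  rw [Submodule.dualAnnihilator_sup_eq]
  exact (Submodule.map_inf _ ((Pi.basisFun F (Fin n)).toDualEquiv.symm.injective)).symm

/-- reformulation of the `l = 1` code condition as pairwise intersection bound -/
lemma code_iff {k t : ℕ} (C : Finset (Submodule F (Fin n → F))) :
    IsMultipleCode F n k t 1 C ↔
      (∀ V ∈ C, finrank F V = k) ∧
      ∀ V ∈ C, ∀ W ∈ C, V ≠ W → finrank F (V ⊓ W : Submodule F (Fin n → F)) < t := by
  constructor
  · rintro ⟨hd, hl⟩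
    refine ⟨hd, fun V hV W hW hVW => ?_⟩
    by_contra hc
    push_neg at hc
    obtain ⟨T, hT, hTt⟩ := exists_sub (V ⊓ W) hc
    have := hl T hTt
    have hmem : V ∈ C.filter (fun U => T ≤ U) :=
      Finset.mem_filter.mpr ⟨hV, hT.trans inf_le_left⟩
    have hmem' : W ∈ C.filter (fun U => T ≤ U) :=
      Finset.mem_filter.mpr ⟨hW, hT.trans inf_le_right⟩
    exact hVW (Finset.card_le_one.mp this V hmem W hmem')
  · rintro ⟨hd, hp⟩
    refine ⟨hd, fun T hT => Finset.card_le_one.mpr fun V hV W hW => ?_⟩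
    rw [Finset.mem_filter] at hV hW
    by_contra hVW
    have hle : T ≤ V ⊓ W := le_inf hV.2 hW.2
    have : t ≤ finrank F (V ⊓ W : Submodule F (Fin n → F)) := by
      rw [← hT]; exact Submodule.finrank_mono hle
    exact absurd this (not_le.mpr (hp V hV.1 W hW.1 hVW))

lemma aq_le (n k t : ℕ) (ht1 : 1 ≤ t) (htk : t < k) (hkn : k < n) (h2k : 2 * k < n + t) :
    Aq F n k t 1 ≤ Aq F n (n - k) (n + t - 2 * k) 1 := by
  unfold Aq
  have hne : ({m | ∃ C : Finset (Submodule F (Fin n → F)),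
      IsMultipleCode F n k t 1 C ∧ C.card = m} : Set ℕ).Nonempty := by
    exact ⟨0, ∅, ⟨fun V hV => absurd hV (Finset.notMem_empty V), fun T hT => by simp⟩, rfl⟩
  refine csSup_le hne ?_
  rintro m ⟨C, hC, rfl⟩
  rw [code_iff] at hC
  obtain ⟨hd, hp⟩ := hC
  have hbdd : BddAbove {m | ∃ C : Finset (Submodule F (Fin n → F)),
      IsMultipleCode F n (n - k) (n + t - 2 * k) 1 C ∧ C.card = m} := by
    refine ⟨Fintype.card (Submodule F (Fin n → F)), ?_⟩
    rintro m ⟨C', _, rfl⟩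
    exact Finset.card_le_univ C'
  refine le_csSup hbdd ⟨C.image Phi, ?_, ?_⟩
  · rw [code_iff]
    constructor
    · rintro V hV
      obtain ⟨W, hW, rfl⟩ := Finset.mem_image.mp hV
      have := finrank_Phi W
      rw [hd W hW] at this
      omega
    · rintro V hV W hW hVW
      obtain ⟨V', hV', rfl⟩ := Finset.mem_image.mp hV
      obtain ⟨W', hW', rfl⟩ := Finset.mem_image.mp hW
      have hne' : V' ≠ W' := fun h => hVW (by rw [h])
      have hint : finrank F (V' ⊓ W' : Submodule F (Fin n → F)) < t := hp V' hV' W' hW' hne'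
      have hsum : finrank F (V' ⊔ W' : Submodule F (Fin n → F)) +
          finrank F (V' ⊓ W' : Submodule F (Fin n → F)) = 2 * k := by
        rw [Submodule.finrank_sup_add_finrank_inf_eq, hd V' hV', hd W' hW']; ring
      have hphi : finrank F (Phi (V' ⊔ W')) +
          finrank F (V' ⊔ W' : Submodule F (Fin n → F)) = n := finrank_Phi _
      rw [Phi_inf]
      omega
  · rw [Finset.card_image_of_injective _ Phi_inj]

end Aux

/-- `A_q(n,k,t;1) = A_q(n, n-k, n-2k+t; 1)`. -/
theorem stmt6 (q : ℕ) (hq : IsPrimePow q) (F : Type) [Field F] [Fintype F]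
    (hF : Fintype.card F = q) (n k t : ℕ)
    (ht1 : 1 ≤ t) (htk : t < k) (hkn : k < n) (h2k : 2 * k < n + t) :
    Aq F n k t 1 = Aq F n (n - k) (n + t - 2 * k) 1 := by
  have h1 := aq_le (F := F) n k t ht1 htk hkn h2k
  have h2 := aq_le (F := F) n (n - k) (n + t - 2 * k) (by omega) (by omega) (by omega) (by omega)
  rw [show n - (n - k) = k by omega, show n + (n + t - 2 * k) - 2 * (n - k) = t by omega] at h2
  exact le_antisymm h1 h2
end

section
/- Let q be a prime power, let F_q be a finite field with q elements, and let n, k, δ, α be positive integers with 1 < k < n, 1 ≤ δ ≤ n − k, and 2 ≤ α ≤ [k+δ−1 choose k]_q + 1. Then B_q(n,k,δ;α) ≤ ⌊(α − 1) · [n choose δ+k−1]_q / [n−k choose δ−1]_q⌋. -/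
open scoped Classical

/-- The Gaussian (q-ary) binomial coefficient `[m choose j]_q`,
`∏_{i=0}^{j-1} (q^{m-i} - 1) / (q^{j-i} - 1)` (the quotient is exact). -/
def gaussBinom (q m j : ℕ) : ℕ :=
  (∏ i ∈ Finset.range j, (q ^ (m - i) - 1)) / ∏ i ∈ Finset.range j, (q ^ (j - i) - 1)

/-- `C` is an `a`-`(n,k,d)^c_q` covering Grassmannian code: a set of
`k`-dimensional subspaces of `F^n` such that every `a` distinct codewords
span a subspace of dimension at least `d + k`. -/
def IsCoveringCode (F : Type*) [Field F] (n k d a : ℕ)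
    (C : Finset (Submodule F (Fin n → F))) : Prop :=
  (∀ V ∈ C, Module.finrank F V = k) ∧
  ∀ S ⊆ C, S.card = a → d + k ≤ Module.finrank F ↥(S.sup id)

/-- `Bq F n k d a` is the maximum cardinality of an `a`-`(n,k,d)^c_q`
covering Grassmannian code (no repeated codewords). -/
noncomputable def Bq (F : Type*) [Field F] (n k d a : ℕ) : ℕ :=
  sSup {m | ∃ C : Finset (Submodule F (Fin n → F)), IsCoveringCode F n k d a C ∧ C.card = m}

/-!
Double counting of incidences `V ≤ W` between codewords `V` and `(d + k - 1)`-dimensional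
subspaces `W`. Each codeword lies in exactly `[n - k choose d - 1]_q` such `W` (the
`(d - 1)`-dimensional subspaces of `F^n ⧸ V`), while each `W` contains at most `a - 1`
codewords, since any `a` of them span at least `d + k` dimensions. Hence
`|C| · [n - k choose d - 1]_q ≤ (a - 1) · [n choose d + k - 1]_q`.
-/

open Module Submodule Finset

lemma prod_range_pow_sub_one_pos {q : ℕ} (hq : 2 ≤ q) (j : ℕ) :
    0 < ∏ i ∈ range j, (q ^ (j - i) - 1) :=
  prod_pos fun _ hi ↦ Nat.sub_pos_of_lt <|
    Nat.one_lt_pow (Nat.sub_ne_zero_of_lt (mem_range.1 hi)) hq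

lemma gaussBinom_pos {q m j : ℕ} (hq : 2 ≤ q) (hj : j ≤ m) : 0 < gaussBinom q m j := by
  rw [gaussBinom, Nat.div_pos_iff]
  refine ⟨prod_range_pow_sub_one_pos hq j, prod_le_prod' fun i _ ↦ ?_⟩
  exact Nat.sub_le_sub_right (Nat.pow_le_pow_right (by omega) (by omega)) 1

lemma prod_range_pow_sub_pow {q m j : ℕ} (hj : j ≤ m) :
    ∏ i ∈ range j, (q ^ m - q ^ i) = q ^ (∑ i ∈ range j, i) * ∏ i ∈ range j, (q ^ (m - i) - 1) := by
  rw [← prod_pow_eq_pow_sum, ← prod_mul_distrib]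
  refine prod_congr rfl fun i hi ↦ ?_
  rw [Nat.mul_sub, mul_one, ← pow_add, Nat.add_sub_cancel' ((mem_range.1 hi).le.trans hj)]

section Grassmannian

variable {F V : Type*} [Field F] [Fintype F] [AddCommGroup V] [Module F V] [Finite V]

noncomputable def linearIndependentSpanEqEquiv {j : ℕ} (W : Submodule F V) (hW : finrank F W = j) :
    {s : {s : Fin j → V // LinearIndependent F s} // span F (Set.range s.1) = W}
      ≃ {t : Fin j → W // LinearIndependent F t} where
  toFun s := ⟨fun i ↦ ⟨s.1.1 i, s.2.le (subset_span ⟨i, rfl⟩)⟩,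
    LinearIndependent.of_comp W.subtype s.1.2⟩
  invFun t := ⟨⟨W.subtype ∘ t.1, t.2.map' W.subtype W.ker_subtype⟩, by
    have htop : span F (Set.range t.1) = ⊤ :=
      eq_top_of_finrank_eq (by rw [finrank_span_eq_card t.2, Fintype.card_fin, hW])
    rw [Set.range_comp, ← map_span, htop, Submodule.map_top, range_subtype]⟩
  left_inv _ := rfl
  right_inv _ := rfl

lemma card_linearIndependent_eq_card_mul (j : ℕ) :
    Nat.card {s : Fin j → V // LinearIndependent F s}
      = Nat.card {W : Submodule F V // finrank F W = j}
        * ∏ i ∈ range j, (Fintype.card F ^ j - Fintype.card F ^ i) := by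
  have : Fintype V := Fintype.ofFinite V
  have : Fintype (Submodule F V) := Fintype.ofFinite _
  let spanOf (s : {s : Fin j → V // LinearIndependent F s}) :
      {W : Submodule F V // finrank F W = j} :=
    ⟨span F (Set.range s.1), by rw [finrank_span_eq_card s.2, Fintype.card_fin]⟩
  have card_fiber (W : {W : Submodule F V // finrank F W = j}) :
      Nat.card {s // spanOf s = W} = ∏ i ∈ range j, (Fintype.card F ^ j - Fintype.card F ^ i) := by
    rw [Nat.card_congr ((Equiv.subtypeEquivRight fun s ↦ Subtype.ext_iff).trans
      (linearIndependentSpanEqEquiv W.1 W.2)), card_linearIndependent W.2.ge, W.2,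
      Fin.prod_univ_eq_prod_range (fun i ↦ Fintype.card F ^ j - Fintype.card F ^ i)]
  rw [Nat.card_congr (Equiv.sigmaFiberEquiv spanOf).symm, Nat.card_sigma,
    Fintype.sum_congr _ _ card_fiber, sum_const, card_univ, smul_eq_mul, Nat.card_eq_fintype_card]

theorem card_submodule_finrank_eq {j : ℕ} (hj : j ≤ finrank F V) :
    Nat.card {W : Submodule F V // finrank F W = j} = gaussBinom (Fintype.card F) (finrank F V) j := by
  have hq : 2 ≤ Fintype.card F := Fintype.one_lt_card
  have key := card_linearIndependent_eq_card_mul (F := F) (V := V) j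
  rw [card_linearIndependent hj, Fin.prod_univ_eq_prod_range (fun i ↦ _ ^ _ - _ ^ i),
    prod_range_pow_sub_pow hj, prod_range_pow_sub_pow le_rfl, mul_left_comm] at key
  rw [gaussBinom, Nat.eq_of_mul_eq_mul_left (by positivity) key,
    Nat.mul_div_cancel _ (prod_range_pow_sub_one_pos hq j)]

end Grassmannian

section FiniteDimensional

variable {F M : Type*} [Field F] [AddCommGroup M] [Module F M] [FiniteDimensional F M]

lemma finrank_comap_mkQ (p : Submodule F M) (U : Submodule F (M ⧸ p)) :
    finrank F (U.comap p.mkQ) = finrank F U + finrank F p := by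
  have h := LinearMap.finrank_range_add_finrank_ker (p.mkQ.domRestrict (U.comap p.mkQ))
  rwa [LinearMap.range_domRestrict, map_comap_eq_of_surjective p.mkQ_surjective,
    LinearMap.ker_domRestrict, ker_mkQ,
    LinearEquiv.finrank_eq (comapSubtypeEquivOfLe (le_comap_mkQ p U)), eq_comm] at h

noncomputable def submoduleLeFinrankEqEquiv (p : Submodule F M) {r : ℕ} (hpr : finrank F p ≤ r) :
    {U : Submodule F (M ⧸ p) // finrank F U = r - finrank F p}
      ≃ {W : Submodule F M // p ≤ W ∧ finrank F W = r} where
  toFun U := ⟨U.1.comap p.mkQ, le_comap_mkQ p U.1, by rw [finrank_comap_mkQ, U.2]; omega⟩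
  invFun W := ⟨W.1.map p.mkQ, by
    have h := finrank_comap_mkQ p (W.1.map p.mkQ)
    rw [comap_map_mkQ, sup_eq_right.2 W.2.1, W.2.2] at h
    omega⟩
  left_inv U := Subtype.ext (map_comap_eq_of_surjective p.mkQ_surjective U.1)
  right_inv W := Subtype.ext (by simp only [comap_map_mkQ, sup_eq_right.2 W.2.1])

lemma card_filter_le_le_sub_one {C : Finset (Submodule F M)} {a r : ℕ}
    (hC : ∀ S ⊆ C, #S = a → r ≤ finrank F ↥(S.sup id)) {W : Submodule F M}
    (hW : finrank F W < r) : #(C.filter (· ≤ W)) ≤ a - 1 := by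
  by_contra! hcard
  obtain ⟨S, hSW, hSa⟩ := exists_subset_card_eq (show a ≤ #(C.filter (· ≤ W)) by omega)
  have hS_le : S.sup id ≤ W := Finset.sup_le fun V hV ↦ (mem_filter.1 (hSW hV)).2
  have := hC S (hSW.trans (filter_subset _ _)) hSa
  have := finrank_mono hS_le
  omega

end FiniteDimensional

section Counting

variable {F M : Type*} [Field F] [Fintype F] [AddCommGroup M] [Module F M] [Finite M]

theorem card_submodule_le_finrank_eq (p : Submodule F M) {r : ℕ} (hpr : finrank F p ≤ r)
    (hrM : r ≤ finrank F M) :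
    Nat.card {W : Submodule F M // p ≤ W ∧ finrank F W = r}
      = gaussBinom (Fintype.card F) (finrank F M - finrank F p) (r - finrank F p) := by
  have : Finite (M ⧸ p) := Finite.of_surjective _ p.mkQ_surjective
  have hquot : finrank F (M ⧸ p) = finrank F M - finrank F p := by
    have := p.finrank_quotient_add_finrank; omega
  rw [← Nat.card_congr (submoduleLeFinrankEqEquiv p hpr), card_submodule_finrank_eq (by omega),
    hquot]

end Counting

theorem IsCoveringCode.card_mul_le {F : Type*} [Field F] [Fintype F] {n k d a : ℕ}
    {C : Finset (Submodule F (Fin n → F))} (hC : IsCoveringCode F n k d a C)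
    (hd1 : 1 ≤ d) (hd2 : d ≤ n - k) :
    #C * gaussBinom (Fintype.card F) (n - k) (d - 1)
      ≤ (a - 1) * gaussBinom (Fintype.card F) n (d + k - 1) := by
  have : Fintype (Submodule F (Fin n → F)) := Fintype.ofFinite _
  set T := univ.filter fun W : Submodule F (Fin n → F) ↦ finrank F W = d + k - 1
  have hT : #T = gaussBinom (Fintype.card F) n (d + k - 1) := by
    rw [← Fintype.card_subtype, ← Nat.card_eq_fintype_card, card_submodule_finrank_eq] <;>
      simp only [finrank_fin_fun]; omega
  rw [← hT, mul_comm (a - 1)]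
  refine card_mul_le_card_mul (· ≤ ·) (fun V hV ↦ ?_) (fun W hW ↦ ?_)
  · have hV := hC.1 V hV
    have hcount := card_submodule_le_finrank_eq V (r := d + k - 1) (by omega)
      (by rw [finrank_fin_fun]; omega)
    rw [Nat.card_eq_fintype_card, Fintype.card_subtype, finrank_fin_fun, hV] at hcount
    simp only [bipartiteAbove, T, filter_filter, and_comm, hcount]
    rw [show d + k - 1 - k = d - 1 by omega]
  · exact card_filter_le_le_sub_one hC.2 (by rw [(mem_filter.1 hW).2]; omega)

theorem stmt10_general (q : ℕ) (F : Type) [Field F] [Fintype F]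
    (hF : Fintype.card F = q) (n k d a : ℕ)
    (hd1 : 1 ≤ d) (hd2 : d ≤ n - k) :
    Bq F n k d a ≤ (a - 1) * gaussBinom q n (d + k - 1) / gaussBinom q (n - k) (d - 1) := by
  subst hF
  refine csSup_le' ?_
  rintro _ ⟨C, hC, rfl⟩
  exact (Nat.le_div_iff_mul_le (gaussBinom_pos Fintype.one_lt_card (by omega))).2
    (hC.card_mul_le hd1 hd2)

/-- The packing bound for covering Grassmannian codes:
`B_q(n,k,d;a) ≤ ⌊(a-1) · [n choose d+k-1]_q / [n-k choose d-1]_q⌋`. -/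
theorem stmt10 (q : ℕ) (hq : IsPrimePow q) (F : Type) [Field F] [Fintype F]
    (hF : Fintype.card F = q) (n k d a : ℕ)
    (hk : 1 < k) (hkn : k < n) (hd1 : 1 ≤ d) (hd2 : d ≤ n - k)
    (ha1 : 2 ≤ a) (ha2 : a ≤ gaussBinom q (k + d - 1) k + 1) :
    Bq F n k d a ≤ (a - 1) * gaussBinom q n (d + k - 1) / gaussBinom q (n - k) (d - 1) :=
  stmt10_general q F hF n k d a hd1 hd2
end

section
/- Let q be a prime power, let F_q be a finite field with q elements, and let n, k, t, λ be positive integers with 1 ≤ t < k < n and 1 ≤ λ ≤ [n−t choose k−t]_q. Then A_q(n,k,t;λ) ≤ ⌊((q^n − 1)/(q^k − 1)) · A_q(n−1, k−1, t−1; λ)⌋. -/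
open scoped Classical

section Aux
set_option linter.unusedSectionVars false

variable {F : Type*} [Field F] [Fintype F]

lemma aux_finite (m : ℕ) : Finite (Submodule F (Fin m → F)) :=
  Finite.of_injective (fun p => (p : Set (Fin m → F))) SetLike.coe_injective

/-- Rank-nullity style: for a submodule `W` containing the kernel of `φ`,
`finrank (map φ W) + finrank (ker φ) = finrank W`. -/
lemma aux_finrank_map {M N : Type*} [AddCommGroup M] [Module F M] [FiniteDimensional F M]
    [AddCommGroup N] [Module F N] (φ : M →ₗ[F] N) (W : Submodule F M)
    (hW : LinearMap.ker φ ≤ W) :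
    Module.finrank F (Submodule.map φ W) + Module.finrank F (LinearMap.ker φ)
      = Module.finrank F W := by
  have h := LinearMap.finrank_range_add_finrank_ker (φ.comp W.subtype)
  have hr : LinearMap.range (φ.comp W.subtype) = Submodule.map φ W := by
    rw [LinearMap.range_comp, Submodule.range_subtype]
  have hk : LinearMap.ker (φ.comp W.subtype)
      = Submodule.comap W.subtype (LinearMap.ker φ) := by
    rw [LinearMap.ker_comp]
  rw [hr, hk] at h
  rw [← h, (Submodule.comapSubtypeEquivOfLe hW).finrank_eq]

/-- The key derived-code bound: for a nonzero vector `v`, the number of codewords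
containing `v` is at most `Aq F (n-1) (k-1) (t-1) l`. -/
lemma aux_derived (n k t l : ℕ) (hn : 1 ≤ n) (ht : 1 ≤ t)
    (C : Finset (Submodule F (Fin n → F))) (hC : IsMultipleCode F n k t l C)
    (v : Fin n → F) (hv : v ≠ 0) :
    (C.filter fun V => v ∈ V).card ≤ Aq F (n - 1) (k - 1) (t - 1) l := by
  set P : Submodule F (Fin n → F) := Submodule.span F {v} with hPdef
  have hP1 : Module.finrank F P = 1 := finrank_span_singleton hv
  have hq : Module.finrank F ((Fin n → F) ⧸ P) = n - 1 := by
    have h := Submodule.finrank_quotient_add_finrank P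
    rw [hP1, Module.finrank_fin_fun] at h
    omega
  obtain ⟨e⟩ : Nonempty (((Fin n → F) ⧸ P) ≃ₗ[F] (Fin (n - 1) → F)) := by
    apply FiniteDimensional.nonempty_linearEquiv_of_finrank_eq
    rw [hq, Module.finrank_fin_fun]
  set φ : (Fin n → F) →ₗ[F] (Fin (n - 1) → F) := e.toLinearMap.comp P.mkQ with hφdef
  have hsurj : Function.Surjective φ := by
    simp only [hφdef, LinearMap.coe_comp]
    exact e.surjective.comp (Submodule.mkQ_surjective P)
  have hker : LinearMap.ker φ = P := by
    rw [hφdef, LinearMap.ker_comp, LinearEquiv.ker, Submodule.comap_bot, Submodule.ker_mkQ]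
  -- codewords containing v
  set CP := C.filter (fun V => v ∈ V) with hCP
  have hPle : ∀ V ∈ CP, P ≤ V := by
    intro V hV
    rw [hCP, Finset.mem_filter] at hV
    exact (Submodule.span_singleton_le_iff_mem v V).2 hV.2
  have hcm : ∀ V : Submodule F (Fin n → F), P ≤ V →
      Submodule.comap φ (Submodule.map φ V) = V := by
    intro V hle
    rw [Submodule.comap_map_eq, hker, sup_eq_left.2 hle]
  have hinj : Set.InjOn (Submodule.map φ) CP := by
    intro V1 h1 V2 h2 h
    have := congrArg (Submodule.comap φ) h
    rwa [hcm V1 (hPle V1 h1), hcm V2 (hPle V2 h2)] at this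
  set C' := CP.image (Submodule.map φ) with hC'
  have hcard : C'.card = CP.card := Finset.card_image_of_injOn hinj
  -- finrank of images
  have hrk : ∀ V : Submodule F (Fin n → F), P ≤ V →
      Module.finrank F (Submodule.map φ V) + 1 = Module.finrank F V := by
    intro V hle
    have := aux_finrank_map φ V (hker ▸ hle)
    rwa [hker, hP1] at this
  have hmc : IsMultipleCode F (n - 1) (k - 1) (t - 1) l C' := by
    constructor
    · intro V' hV'
      rw [hC', Finset.mem_image] at hV'
      obtain ⟨V, hV, rfl⟩ := hV'
      have hVC : V ∈ C := Finset.mem_of_mem_filter V hV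
      have := hrk V (hPle V hV)
      rw [hC.1 V hVC] at this
      omega
    · intro T' hT'
      set T := Submodule.comap φ T' with hT
      have hkerT : LinearMap.ker φ ≤ T := by
        rw [hT]; exact le_trans (by rw [← Submodule.comap_bot]) (Submodule.comap_mono bot_le)
      have hmapT : Submodule.map φ T = T' := Submodule.map_comap_eq_of_surjective hsurj T'
      have hTrank : Module.finrank F T = t := by
        have h2 := aux_finrank_map φ T hkerT
        rw [hmapT, hker, hP1, hT'] at h2
        omega
      have hiff : ∀ V : Submodule F (Fin n → F), P ≤ V →
          (T' ≤ Submodule.map φ V ↔ T ≤ V) := by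
        intro V hle
        constructor
        · intro h
          have := Submodule.comap_mono (f := φ) h
          rwa [hcm V hle] at this
        · intro h
          calc T' = Submodule.map φ T := hmapT.symm
            _ ≤ Submodule.map φ V := Submodule.map_mono h
      have hsub : C'.filter (fun V' => T' ≤ V')
          ⊆ (CP.filter (fun V => T ≤ V)).image (Submodule.map φ) := by
        intro V' hV'
        rw [Finset.mem_filter, hC', Finset.mem_image] at hV'
        obtain ⟨⟨V, hV, rfl⟩, hle⟩ := hV'
        rw [Finset.mem_image]
        exact ⟨V, Finset.mem_filter.2 ⟨hV, (hiff V (hPle V hV)).1 hle⟩, rfl⟩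
      calc (C'.filter (fun V' => T' ≤ V')).card
          ≤ ((CP.filter (fun V => T ≤ V)).image (Submodule.map φ)).card :=
            Finset.card_le_card hsub
        _ ≤ (CP.filter (fun V => T ≤ V)).card := Finset.card_image_le
        _ ≤ (C.filter (fun V => T ≤ V)).card := by
            apply Finset.card_le_card
            exact Finset.filter_subset_filter _ (Finset.filter_subset _ _)
        _ ≤ l := hC.2 T hTrank
  -- conclude via sSup
  have : Finite (Submodule F (Fin (n - 1) → F)) := aux_finite (n - 1)
  have : Fintype (Submodule F (Fin (n - 1) → F)) := Fintype.ofFinite _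
  have hbdd : BddAbove {m | ∃ D : Finset (Submodule F (Fin (n - 1) → F)),
      IsMultipleCode F (n - 1) (k - 1) (t - 1) l D ∧ D.card = m} := by
    refine ⟨Fintype.card (Submodule F (Fin (n - 1) → F)), ?_⟩
    rintro m ⟨D, _, rfl⟩
    exact Finset.card_le_univ D
  have hmem : CP.card ∈ {m | ∃ D : Finset (Submodule F (Fin (n - 1) → F)),
      IsMultipleCode F (n - 1) (k - 1) (t - 1) l D ∧ D.card = m} :=
    ⟨C', hmc, hcard⟩
  exact le_csSup hbdd hmem

end Aux

/-- The Johnson-type bound: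
`A_q(n,k,t;l) ≤ ⌊((q^n - 1)/(q^k - 1)) · A_q(n-1, k-1, t-1; l)⌋`. -/
theorem stmt11 (q : ℕ) (hq : IsPrimePow q) (F : Type) [Field F] [Fintype F]
    (hF : Fintype.card F = q) (n k t l : ℕ)
    (ht1 : 1 ≤ t) (htk : t < k) (hkn : k < n)
    (hl1 : 1 ≤ l) (hl2 : l ≤ gaussBinom q (n - t) (k - t)) :
    Aq F n k t l ≤ (q ^ n - 1) * Aq F (n - 1) (k - 1) (t - 1) l / (q ^ k - 1) := by
  have hq2 : 2 ≤ q := hq.two_le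
  have hqk : 0 < q ^ k - 1 := by
    have h1 : 2 ^ k ≤ q ^ k := Nat.pow_le_pow_left hq2 k
    have h2 : 1 < 2 ^ k := Nat.one_lt_two_pow_iff.2 (by omega)
    omega
  apply csSup_le'
  rintro m ⟨C, hC, rfl⟩
  rw [Nat.le_div_iff_mul_le hqk]
  set A := Aq F (n - 1) (k - 1) (t - 1) l with hA
  set N := Finset.univ.filter (fun v : Fin n → F => v ≠ 0) with hN
  have hNcard : N.card = q ^ n - 1 := by
    have h0 : N = Finset.univ.erase 0 := by
      ext v; simp [hN]
    rw [h0, Finset.card_erase_of_mem (Finset.mem_univ _), Finset.card_univ]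
    congr 1
    rw [Fintype.card_fun, hF, Fintype.card_fin]
  -- the count of nonzero vectors in each codeword
  have hVcount : ∀ V ∈ C, (N.filter (fun v => v ∈ V)).card = q ^ k - 1 := by
    intro V hV
    have hfil : N.filter (fun v => v ∈ V)
        = (Finset.univ.filter (fun v => v ∈ V)).erase 0 := by
      ext v
      simp only [hN, Finset.mem_filter, Finset.mem_erase, Finset.mem_univ, true_and]
    have hfull : (Finset.univ.filter (fun v : Fin n → F => v ∈ V)).card = q ^ k := by
      rw [← Fintype.card_subtype]
      have : Fintype.card {v : Fin n → F // v ∈ V} = Fintype.card F ^ Module.finrank F V :=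
        Module.card_eq_pow_finrank (K := F)
      rw [this, hF]
      congr 1
      exact hC.1 V hV
    rw [hfil, Finset.card_erase_of_mem, hfull]
    exact Finset.mem_filter.2 ⟨Finset.mem_univ _, V.zero_mem⟩
  -- double counting
  have hdc : ∑ v ∈ N, (C.filter (fun V => v ∈ V)).card
      = ∑ V ∈ C, (N.filter (fun v => v ∈ V)).card := by
    simp only [Finset.card_filter]
    rw [Finset.sum_comm]
  have hL : C.card * (q ^ k - 1) = ∑ v ∈ N, (C.filter (fun V => v ∈ V)).card := by
    rw [hdc, Finset.sum_congr rfl hVcount, Finset.sum_const, smul_eq_mul]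
  have hR : ∑ v ∈ N, (C.filter (fun V => v ∈ V)).card ≤ (q ^ n - 1) * A := by
    calc ∑ v ∈ N, (C.filter (fun V => v ∈ V)).card ≤ ∑ v ∈ N, A := by
          apply Finset.sum_le_sum
          intro v hv
          rw [hN, Finset.mem_filter] at hv
          exact aux_derived n k t l (by omega) ht1 C hC v hv.2
      _ = (q ^ n - 1) * A := by rw [Finset.sum_const, smul_eq_mul, hNcard]
  omega
end

section
/- Let q be a prime power, let F_q be a finite field with q elements, and let n, k, t, λ be positive integers with 1 ≤ t < k < n and 1 ≤ λ ≤ [n−1−t choose k−t]_q. Then A_q(n,k,t;λ) ≤ ⌊((q^n − 1)/(q^{n−k} − 1)) · A_q(n−1, k, t; λ)⌋. -/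
open scoped Classical

/-!
Double count the pairs `(V, H)` with `V ∈ C` and `H ⊇ V` a hyperplane. A `k`-space lies in
`(q^(n-k) - 1)/(q - 1)` hyperplanes, and there are `(q^n - 1)/(q - 1)` hyperplanes in all (by
duality, hyperplanes containing `U` correspond to the lines of the annihilator of `U`). The codewords
inside a hyperplane `H ≅ F^(n-1)` form a code of length `n - 1`, so there are at most
`A_q(n-1,k,t;λ)` of them.
-/

open Module Finset

namespace Submodule

variable {K V : Type*} [Field K] [AddCommGroup V] [Module K V]

theorem natCard_le_finrank_eq_one_mul (P : Submodule K V) [FiniteDimensional K P] :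
    Nat.card {L : Submodule K V // L ≤ P ∧ finrank K L = 1} * (Nat.card K - 1)
      = Nat.card K ^ finrank K P - 1 := by
  let e : {L : Submodule K P // finrank K L = 1} ≃ {L : Submodule K V // L ≤ P ∧ finrank K L = 1} :=
    ((MapSubtype.orderIso P).toEquiv.subtypeEquiv (p := fun L : Submodule K P => finrank K L = 1)
      (q := fun L : {L : Submodule K V // L ≤ P} => finrank K L.1 = 1) fun L => by
        rw [← finrank_map_subtype_eq P L]; rfl).trans
      (Equiv.subtypeSubtypeEquivSubtypeInter (fun L => L ≤ P) (fun L => finrank K L = 1))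
  rw [← Nat.card_congr e, ← Nat.card_congr (Projectivization.equivSubmodule K P),
    ← Projectivization.card, Module.natCard_eq_pow_finrank (K := K) (V := P)]

theorem card_filter_finrank_eq_sub_one_ge_mul [Fintype K] [FiniteDimensional K V]
    [Fintype (Submodule K V)] (U : Submodule K V) (hU : finrank K U < finrank K V) :
    #{H : Submodule K V | finrank K H = finrank K V - 1 ∧ U ≤ H} * (Fintype.card K - 1)
      = Fintype.card K ^ (finrank K V - finrank K U) - 1 := by
  have hrank (W : Submodule K V) : finrank K W.dualAnnihilator = finrank K V - finrank K W := by
    have := Subspace.finrank_add_finrank_dualAnnihilator_eq W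
    omega
  let e : {H : Submodule K V // finrank K H = finrank K V - 1 ∧ U ≤ H} ≃
      {L : Submodule K (Dual K V) // L ≤ U.dualAnnihilator ∧ finrank K L = 1} :=
    (Subspace.orderIsoFiniteDimensional (K := K) (V := V)).toEquiv.subtypeEquiv fun H => by
      change _ ↔ H.dualAnnihilator ≤ U.dualAnnihilator ∧ finrank K H.dualAnnihilator = 1
      rw [Subspace.dualAnnihilator_le_dualAnnihilator_iff, hrank]
      have := H.finrank_le
      exact and_comm.trans (and_congr_right fun _ => by omega)
  rw [← Fintype.card_subtype, Fintype.card_eq_nat_card, Fintype.card_eq_nat_card,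
    Nat.card_congr e, natCard_le_finrank_eq_one_mul, hrank]

end Submodule

section MultipleCode

variable {F : Type*} [Field F] {n k t l : ℕ}

theorem IsMultipleCode.card_le_Aq [Finite F] {C : Finset (Submodule F (Fin n → F))}
    (hC : IsMultipleCode F n k t l C) : #C ≤ Aq F n k t l := by
  have := Fintype.ofFinite (Submodule F (Fin n → F))
  exact le_csSup ⟨_, by rintro _ ⟨D, -, rfl⟩; exact D.card_le_univ⟩ ⟨C, hC, rfl⟩

theorem Aq_le {m : ℕ} (h : ∀ C, IsMultipleCode F n k t l C → #C ≤ m) : Aq F n k t l ≤ m :=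
  csSup_le' <| by
    rintro _ ⟨C, hC, rfl⟩
    exact h C hC

theorem IsMultipleCode.preimage_map {m : ℕ} {C : Finset (Submodule F (Fin n → F))}
    (hC : IsMultipleCode F n k t l C) {φ : (Fin m → F) →ₗ[F] (Fin n → F)}
    (hφ : Function.Injective φ) :
    IsMultipleCode F m k t l
      (C.preimage (Submodule.map φ) (Submodule.map_injective_of_injective hφ).injOn) := by
  have hrank (U : Submodule F (Fin m → F)) : finrank F (U.map φ) = finrank F U :=
    (Submodule.equivMapOfInjective φ hφ U).finrank_eq.symm
  refine ⟨fun U hU => hrank U ▸ hC.1 _ (mem_preimage.mp hU), fun T hT => ?_⟩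
  calc #{U ∈ C.preimage (Submodule.map φ) _ | T ≤ U}
      ≤ #{V ∈ C | T.map φ ≤ V} := by
        refine card_le_card_of_injOn (Submodule.map φ) (fun U hU => ?_)
          (Submodule.map_injective_of_injective hφ).injOn
        simp only [coe_filter, mem_preimage] at hU ⊢
        exact ⟨hU.1, Submodule.map_mono hU.2⟩
    _ ≤ l := hC.2 _ (by rw [hrank, hT])

theorem IsMultipleCode.card_filter_le_range_le_Aq [Finite F] {m : ℕ}
    {C : Finset (Submodule F (Fin n → F))} (hC : IsMultipleCode F n k t l C)
    {φ : (Fin m → F) →ₗ[F] (Fin n → F)} (hφ : Function.Injective φ) :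
    #{V ∈ C | V ≤ LinearMap.range φ} ≤ Aq F m k t l := by
  have hrange (V : Submodule F (Fin n → F)) :
      V ∈ Set.range (Submodule.map φ) ↔ V ≤ LinearMap.range φ :=
    ⟨by rintro ⟨U, rfl⟩; exact LinearMap.map_le_range, fun h => ⟨_, Submodule.map_comap_eq_of_le h⟩⟩
  simpa only [hrange, card_preimage] using (hC.preimage_map hφ).card_le_Aq

theorem IsMultipleCode.card_filter_le_le_Aq [Finite F] {C : Finset (Submodule F (Fin n → F))}
    (hC : IsMultipleCode F n k t l C) {H : Submodule F (Fin n → F)} (hH : finrank F H = n - 1) :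
    #{V ∈ C | V ≤ H} ≤ Aq F (n - 1) k t l := by
  let e : (Fin (n - 1) → F) ≃ₗ[F] H := LinearEquiv.ofFinrankEq _ _ (by simp [hH])
  have hrange : LinearMap.range (H.subtype ∘ₗ e.toLinearMap) = H := by
    rw [LinearMap.range_comp_of_range_eq_top _ e.range, Submodule.range_subtype]
  simpa only [hrange] using hC.card_filter_le_range_le_Aq (φ := H.subtype ∘ₗ e.toLinearMap)
    (H.injective_subtype.comp e.injective)

theorem IsMultipleCode.card_mul_le [Fintype F] {C : Finset (Submodule F (Fin n → F))}
    (hC : IsMultipleCode F n k t l C) (hkn : k < n) :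
    #C * (Fintype.card F ^ (n - k) - 1) ≤ (Fintype.card F ^ n - 1) * Aq F (n - 1) k t l := by
  set q := Fintype.card F
  have card_hyperplanes_ge (U : Submodule F (Fin n → F)) (hU : finrank F U < n) :
      #{H : Submodule F (Fin n → F) | finrank F H = n - 1 ∧ U ≤ H} * (q - 1)
        = q ^ (n - finrank F U) - 1 := by
    simpa only [finrank_fin_fun] using
      Submodule.card_filter_finrank_eq_sub_one_ge_mul U (by rwa [finrank_fin_fun])
  let hyperplanes : Finset (Submodule F (Fin n → F)) := {H | finrank F H = n - 1}
  have card_hyperplanes : #hyperplanes * (q - 1) = q ^ n - 1 := by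
    simpa only [bot_le, and_true, finrank_bot, Nat.sub_zero] using
      card_hyperplanes_ge ⊥ (by simp; omega)
  have card_above (V : Submodule F (Fin n → F)) (hV : V ∈ C) :
      #(hyperplanes.bipartiteAbove (· ≤ ·) V) * (q - 1) = q ^ (n - k) - 1 := by
    rw [bipartiteAbove, filter_filter, card_hyperplanes_ge V (by rw [hC.1 V hV]; exact hkn),
      hC.1 V hV]
  calc #C * (q ^ (n - k) - 1)
      = (∑ V ∈ C, #(hyperplanes.bipartiteAbove (· ≤ ·) V)) * (q - 1) := by
        rw [sum_mul, sum_congr rfl card_above, sum_const, smul_eq_mul]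
    _ = (∑ H ∈ hyperplanes, #(C.bipartiteBelow (· ≤ ·) H)) * (q - 1) := by
        rw [sum_card_bipartiteAbove_eq_sum_card_bipartiteBelow]
    _ ≤ (#hyperplanes * Aq F (n - 1) k t l) * (q - 1) := by
        gcongr
        refine (sum_le_card_nsmul _ _ _ fun H hH => ?_).trans_eq (smul_eq_mul ..)
        exact hC.card_filter_le_le_Aq (mem_filter.mp hH).2
    _ = (q ^ n - 1) * Aq F (n - 1) k t l := by
        rw [mul_right_comm, card_hyperplanes]

end MultipleCode

theorem stmt12_general (q : ℕ) (F : Type) [Field F] [Fintype F]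
    (hF : Fintype.card F = q) (n k t l : ℕ) (hkn : k < n) :
    Aq F n k t l ≤ (q ^ n - 1) * Aq F (n - 1) k t l / (q ^ (n - k) - 1) := by
  subst hF
  have hq : 1 < Fintype.card F := Fintype.one_lt_card
  have hpos : 0 < Fintype.card F ^ (n - k) - 1 := Nat.sub_pos_of_lt (Nat.one_lt_pow (by omega) hq)
  exact Aq_le fun C hC => (Nat.le_div_iff_mul_le hpos).mpr (hC.card_mul_le hkn)

/-- The Johnson-type bound:
`A_q(n,k,t;l) ≤ ⌊((q^n - 1)/(q^{n-k} - 1)) · A_q(n-1, k, t; l)⌋`. -/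
theorem stmt12 (q : ℕ) (hq : IsPrimePow q) (F : Type) [Field F] [Fintype F]
    (hF : Fintype.card F = q) (n k t l : ℕ)
    (ht1 : 1 ≤ t) (htk : t < k) (hkn : k < n)
    (hl1 : 1 ≤ l) (hl2 : l ≤ gaussBinom q (n - 1 - t) (k - t)) :
    Aq F n k t l ≤ (q ^ n - 1) * Aq F (n - 1) k t l / (q ^ (n - k) - 1) :=
  stmt12_general q F hF n k t l hkn
end

section
/- Let q be a prime power, let F_q be a finite field with q elements, and let n, k, δ, α be positive integers with 1 < k < n, 1 ≤ δ ≤ n − k, and 2 ≤ α ≤ [k+δ−1 choose k]_q + 1. Then B_q(n,k,δ;α) ≤ ⌊((q^n − 1)/(q^{n−k} − 1)) · B_q(n−1, k, δ; α)⌋. -/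
open scoped Classical

section Aux

open Module

variable {F : Type} [Field F] [Fintype F]

noncomputable instance instFinDualAux (n : ℕ) : Fintype (Module.Dual F (Fin n → F)) :=
  Fintype.ofInjective (fun f => (f : (Fin n → F) → F)) DFunLike.coe_injective

noncomputable instance instFinSubAux (m : ℕ) : Fintype (Submodule F (Fin m → F)) :=
  Fintype.ofInjective (fun W => (W : Set (Fin m → F))) SetLike.coe_injective

omit [Fintype F] in
lemma finrank_dualAnn_aux {n : ℕ} (c : Submodule F (Fin n → F)) :
    finrank F c.dualAnnihilator = n - finrank F c := by
  have h := Submodule.finrank_quotient_add_finrank (c.dualAnnihilator)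
  have h2 := (Subspace.quotAnnihilatorEquiv c).finrank_eq
  have h3 : finrank F (Module.Dual F (Fin n → F)) = n := by
    rw [Subspace.dual_finrank_eq, Module.finrank_fin_fun]
  have h4 : finrank F (Module.Dual F c) = finrank F c := Subspace.dual_finrank_eq
  omega

lemma count_c_aux {n : ℕ} (c : Submodule F (Fin n → F)) :
    (Finset.univ.filter fun f : Module.Dual F (Fin n → F) =>
      f ≠ 0 ∧ c ≤ LinearMap.ker f).card = Fintype.card F ^ (n - finrank F c) - 1 := by
  have hmem : ∀ f : Module.Dual F (Fin n → F), (c ≤ LinearMap.ker f) ↔ f ∈ c.dualAnnihilator := by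
    intro f
    rw [Submodule.mem_dualAnnihilator]
    constructor
    · intro h w hw; exact h hw
    · intro h x hx; exact LinearMap.mem_ker.mpr (h x hx)
  have h1 : (Finset.univ.filter fun f : Module.Dual F (Fin n → F) =>
      f ≠ 0 ∧ c ≤ LinearMap.ker f) =
      (Finset.univ.filter fun f : Module.Dual F (Fin n → F) => c ≤ LinearMap.ker f).erase 0 := by
    ext f
    simp only [Finset.mem_filter, Finset.mem_erase, Finset.mem_univ, true_and, and_comm]
  rw [h1, Finset.card_erase_of_mem (by simp [hmem])]
  congr 1
  have h2 : (Finset.univ.filter fun f : Module.Dual F (Fin n → F) => c ≤ LinearMap.ker f) =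
      (Finset.univ.filter fun f : Module.Dual F (Fin n → F) => f ∈ c.dualAnnihilator) := by
    apply Finset.filter_congr; intro f _; simp [hmem f]
  rw [h2, ← Fintype.card_subtype, ← finrank_dualAnn_aux c,
    ← Module.card_eq_pow_finrank (K := F) (V := c.dualAnnihilator)]

lemma filter_le_aux (n k d a : ℕ) (C : Finset (Submodule F (Fin n → F)))
    (hC : IsCoveringCode F n k d a C) (f : Module.Dual F (Fin n → F)) (hf : f ≠ 0) :
    (C.filter fun c => c ≤ LinearMap.ker f).card ≤ Bq F (n - 1) k d a := by
  set K := LinearMap.ker f with hK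
  have hrange : finrank F (LinearMap.range f) = 1 := by
    have h1 : finrank F (LinearMap.range f) ≤ 1 := by
      simpa using Submodule.finrank_le (LinearMap.range f)
    have h0 : LinearMap.range f ≠ ⊥ := fun h => hf (LinearMap.range_eq_bot.mp h)
    have := (Submodule.finrank_eq_zero (S := LinearMap.range f)).not.mpr h0
    omega
  have hker : finrank F K = n - 1 := by
    have h5 := LinearMap.finrank_range_add_finrank_ker f
    rw [Module.finrank_fin_fun, hrange, ← hK] at h5
    omega
  have heq : finrank F K = finrank F (Fin (n-1) → F) := by
    rw [Module.finrank_fin_fun]; exact hker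
  obtain ⟨e⟩ := FiniteDimensional.nonempty_linearEquiv_of_finrank_eq heq
  set φ : Submodule F (Fin n → F) → Submodule F (Fin (n-1) → F) :=
    fun c => (c.comap K.subtype).map (e : K →ₗ[F] (Fin (n-1) → F)) with hφ
  have hmapcomap : ∀ c : Submodule F (Fin n → F), c ≤ K →
      (c.comap K.subtype).map K.subtype = c := by
    intro c hc
    rw [Submodule.map_comap_subtype]
    exact inf_eq_right.mpr hc
  have hrank : ∀ c : Submodule F (Fin n → F), c ≤ K → finrank F (φ c) = finrank F c := by
    intro c hc
    have h6 := Submodule.finrank_map_subtype_eq K (c.comap K.subtype)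
    rw [hmapcomap c hc] at h6
    rw [hφ]
    dsimp only
    rw [LinearEquiv.finrank_map_eq e]
    exact h6.symm
  have hinj : ∀ c ∈ C.filter (fun c => c ≤ K), ∀ c' ∈ C.filter (fun c => c ≤ K),
      φ c = φ c' → c = c' := by
    intro c hc c' hc' h
    rw [Finset.mem_filter] at hc hc'
    have := Submodule.map_injective_of_injective e.injective h
    rw [← hmapcomap c hc.2, ← hmapcomap c' hc'.2, this]
  have hsup : ∀ S : Finset (Submodule F (Fin n → F)), (∀ c ∈ S, c ≤ K) →
      finrank F ↥(S.sup φ) = finrank F ↥(S.sup id) := by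
    intro S hS
    have h1 : S.sup φ = (S.sup fun c => c.comap K.subtype).map (e : K →ₗ[F] (Fin (n-1) → F)) := by
      rw [Finset.comp_sup_eq_sup_comp (Submodule.map (e : K →ₗ[F] (Fin (n-1) → F)))
        (fun p q => Submodule.map_sup p q _) (Submodule.map_bot _)]
      rfl
    have h2 : (S.sup fun c => c.comap K.subtype).map K.subtype = S.sup id := by
      rw [Finset.comp_sup_eq_sup_comp (Submodule.map K.subtype)
        (fun p q => Submodule.map_sup p q _) (Submodule.map_bot _)]
      exact Finset.sup_congr rfl fun c hc => hmapcomap c (hS c hc)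
    have h3 := Submodule.finrank_map_subtype_eq K (S.sup fun c => c.comap K.subtype)
    rw [h2] at h3
    rw [h1, LinearEquiv.finrank_map_eq e]
    exact h3.symm
  set D := (C.filter (fun c => c ≤ K)).image φ with hD
  have hcard : D.card = (C.filter (fun c => c ≤ K)).card :=
    Finset.card_image_of_injOn hinj
  have hcover : IsCoveringCode F (n-1) k d a D := by
    constructor
    · intro V hV
      rw [hD, Finset.mem_image] at hV
      obtain ⟨c, hc, rfl⟩ := hV
      rw [Finset.mem_filter] at hc
      rw [hrank c hc.2]
      exact hC.1 c hc.1
    · intro S' hS' hScard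
      rw [hD] at hS'
      obtain ⟨S, hSsub, rfl⟩ := Finset.subset_image_iff.mp hS'
      have hSK : ∀ c ∈ S, c ≤ K := fun c hc => (Finset.mem_filter.mp (hSsub hc)).2
      have hSC : S ⊆ C := fun c hc => (Finset.mem_filter.mp (hSsub hc)).1
      have hScard' : S.card = a := by
        rw [← hScard]
        exact (Finset.card_image_of_injOn fun c hc c' hc' h =>
          hinj c (hSsub hc) c' (hSsub hc') h).symm
      rw [Finset.sup_image]
      have hid : S.sup (id ∘ φ) = S.sup φ := rfl
      rw [hid, hsup S hSK]
      exact hC.2 S hSC hScard'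
  have hbdd : BddAbove {m | ∃ C : Finset (Submodule F (Fin (n-1) → F)),
      IsCoveringCode F (n-1) k d a C ∧ C.card = m} := by
    refine ⟨Fintype.card (Submodule F (Fin (n-1) → F)), ?_⟩
    rintro s ⟨C', _, rfl⟩
    exact Finset.card_le_univ C'
  calc (C.filter fun c => c ≤ K).card = D.card := hcard.symm
    _ ≤ _ := le_csSup hbdd ⟨D, hcover, rfl⟩

end Aux

/-- The Johnson-type bound for covering Grassmannian codes:
`B_q(n,k,d;a) ≤ ⌊((q^n - 1)/(q^{n-k} - 1)) · B_q(n-1, k, d; a)⌋`. -/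
theorem stmt13 (q : ℕ) (hq : IsPrimePow q) (F : Type) [Field F] [Fintype F]
    (hF : Fintype.card F = q) (n k d a : ℕ)
    (hk : 1 < k) (hkn : k < n) (hd1 : 1 ≤ d) (hd2 : d ≤ n - k)
    (ha1 : 2 ≤ a) (ha2 : a ≤ gaussBinom q (k + d - 1) k + 1) :
    Bq F n k d a ≤ (q ^ n - 1) * Bq F (n - 1) k d a / (q ^ (n - k) - 1) := by
  have hq2 : 2 ≤ q := hq.two_le
  have hpos : 0 < q ^ (n - k) - 1 := by
    have h1 : 1 ≤ n - k := by omega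
    have : q ≤ q ^ (n - k) := Nat.le_self_pow (by omega) q
    omega
  apply csSup_le
  · refine ⟨0, ∅, ⟨by simp, ?_⟩, rfl⟩
    intro S hS hcard
    rw [Finset.subset_empty.mp hS] at hcard
    simp at hcard
    omega
  rintro m ⟨C, hC, rfl⟩
  rw [Nat.le_div_iff_mul_le hpos]
  have key : ∀ c ∈ C, (Finset.univ.filter fun f : Module.Dual F (Fin n → F) =>
      f ≠ 0 ∧ c ≤ LinearMap.ker f).card = q ^ (n - k) - 1 := by
    intro c hc
    rw [count_c_aux c, hC.1 c hc, hF]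
  calc C.card * (q ^ (n - k) - 1)
      = ∑ c ∈ C, (Finset.univ.filter fun f : Module.Dual F (Fin n → F) =>
          f ≠ 0 ∧ c ≤ LinearMap.ker f).card := by
        rw [Finset.sum_congr rfl key, Finset.sum_const, smul_eq_mul]
    _ = ∑ f : Module.Dual F (Fin n → F),
          (C.filter fun c => f ≠ 0 ∧ c ≤ LinearMap.ker f).card := by
        simp_rw [Finset.card_filter]
        exact Finset.sum_comm
    _ = ∑ f ∈ Finset.univ.erase (0 : Module.Dual F (Fin n → F)),
          (C.filter fun c => f ≠ 0 ∧ c ≤ LinearMap.ker f).card := by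
        symm
        apply Finset.sum_subset (Finset.subset_univ _)
        intro f _ hf
        have hf0 : f = 0 := by
          by_contra h
          exact hf (Finset.mem_erase.mpr ⟨h, Finset.mem_univ f⟩)
        subst hf0
        simp
    _ ≤ (Finset.univ.erase (0 : Module.Dual F (Fin n → F))).card * Bq F (n - 1) k d a := by
        rw [← smul_eq_mul]
        apply Finset.sum_le_card_nsmul
        intro f hf
        have hfne : f ≠ 0 := (Finset.mem_erase.mp hf).1
        have hfilter : (C.filter fun c => f ≠ 0 ∧ c ≤ LinearMap.ker f) =
            (C.filter fun c => c ≤ LinearMap.ker f) := by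
          apply Finset.filter_congr
          intro c _
          simp [hfne]
        rw [hfilter]
        exact filter_le_aux n k d a C hC f hfne
    _ = (q ^ n - 1) * Bq F (n - 1) k d a := by
        congr 1
        rw [Finset.card_erase_of_mem (Finset.mem_univ _), Finset.card_univ]
        congr 1
        rw [Module.card_eq_pow_finrank (K := F) (V := Module.Dual F (Fin n → F)),
          Subspace.dual_finrank_eq, Module.finrank_fin_fun, hF]
end
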